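/- Let Z_1, …, Z_T be independent centered Gaussian vectors in ℝ^p with Z_i ~ N(0, Σ_i), where Σ_1 is positive definite and ∑_{i=2}^T Σ_i is positive definite. Set S_T = Z_1 + ⋯ + Z_T and V_T = Z_2 + ⋯ + Z_T. Then P(‖Z_1‖₂ > ‖S_T‖₂) = E_{V_T}[ Φ( −‖V_T‖₂ / (2·‖Σ_1^{1/2}·(V_T/‖V_T‖₂)‖₂) ) ]. -/

import Mathlib

open MeasureTheory ProbabilityTheory Filter

/-- The Euclidean (`ℓ²`) norm of a vector in `ℝ^p`. -/
noncomputable def l2norm {p : ℕ} (x : Fin p → ℝ) : ℝ := Real.sqrt (∑ i, (x i) ^ 2)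

/-- The standard normal cumulative distribution function `Φ`. -/
noncomputable def Phi (x : ℝ) : ℝ :=
  ∫ t in Set.Iic x, (Real.sqrt (2 * Real.pi))⁻¹ * Real.exp (-(t ^ 2) / 2)

/-- The standard Gaussian measure on `ℝ^p`. -/
noncomputable def stdGaussianPi (p : ℕ) : Measure (Fin p → ℝ) :=
  Measure.pi fun _ => gaussianReal 0 1

/-- The matrix square root of a positive semidefinite matrix, as `Matrix.PosSemidef.sqrt`
was defined in the older Mathlib (removed since). -/
noncomputable def Matrix.PosSemidef.sqrt {n : Type*} [Fintype n] [DecidableEq n]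
    {A : Matrix n n ℝ} (hA : A.PosSemidef) : Matrix n n ℝ :=
  hA.1.eigenvectorUnitary.1 * Matrix.diagonal ((↑) ∘ (hA.1.eigenvalues · |>.sqrt)) *
    (star hA.1.eigenvectorUnitary : Matrix n n ℝ)

/-- The centered Gaussian measure on `ℝ^p` with covariance matrix `S`, realized as the
pushforward of the standard Gaussian under `x ↦ S^{1/2} x`. -/
noncomputable def gaussianCov {p : ℕ} (S : Matrix (Fin p) (Fin p) ℝ) (hS : S.PosSemidef) :
    Measure (Fin p → ℝ) :=
  Measure.map (fun x => hS.sqrt.mulVec x) (stdGaussianPi p)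

/-
Split `S_T = Z_1 + V_T` with `Z_1` independent of `V_T`. For a fixed `v ≠ 0`,
`‖Z_1 + v‖ < ‖Z_1‖` iff `⟪v, Z_1⟫ < -‖v‖² / 2`, and `⟪v, Z_1⟫ ~ N(0, vᵀ Σ_1 v)` with
`vᵀ Σ_1 v = ‖Σ_1^{1/2} v‖²`; so, conditionally on `V_T = v`, the probability is
`Φ(-‖v‖² / (2 ‖Σ_1^{1/2} v‖))`, which is the integrand. Fubini for the independent pair
`(V_T, Z_1)` turns this into the expectation, and `V_T ≠ 0` almost surely because any
coordinate of `V_T` is a real Gaussian of positive variance.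
-/

open Matrix Set

namespace Matrix.PosSemidef

variable {n : Type*} [Fintype n] [DecidableEq n] {A : Matrix n n ℝ} (hA : A.PosSemidef)
include hA

lemma isHermitian_sqrt : hA.sqrt.IsHermitian := by
  unfold PosSemidef.sqrt
  have hD : (diagonal ((↑) ∘ (hA.1.eigenvalues · |>.sqrt)) : Matrix n n ℝ).PosSemidef :=
    .diagonal fun i => by simp [Real.sqrt_nonneg]
  simpa [star_eq_conjTranspose] using
    (hD.mul_mul_conjTranspose_same (hA.1.eigenvectorUnitary : Matrix n n ℝ)).isHermitian

lemma transpose_sqrt : hA.sqrtᵀ = hA.sqrt :=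
  (conjTranspose_eq_transpose_of_trivial _).symm.trans hA.isHermitian_sqrt

lemma sqrt_mul_self : hA.sqrt * hA.sqrt = A := by
  set U : Matrix n n ℝ := (hA.1.eigenvectorUnitary : Matrix n n ℝ)
  set D : Matrix n n ℝ := diagonal ((↑) ∘ (hA.1.eigenvalues · |>.sqrt))
  have hU : star U * U = 1 := Unitary.coe_star_mul_self _
  have hD : D * D = diagonal (RCLike.ofReal ∘ hA.1.eigenvalues) := by
    rw [diagonal_mul_diagonal]
    congr 1; funext i
    simp [Real.mul_self_sqrt (hA.eigenvalues_nonneg i)]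
  calc hA.sqrt * hA.sqrt = U * (D * (star U * U) * D) * star U := by
        simp only [PosSemidef.sqrt, U, D, Matrix.mul_assoc]
    _ = A := by
        rw [hU, Matrix.mul_one, hD]
        conv_rhs => rw [hA.1.spectral_theorem]
        rfl

lemma vecMul_sqrt (v : n → ℝ) : v ᵥ* hA.sqrt = hA.sqrt *ᵥ v := by
  rw [← mulVec_transpose, hA.transpose_sqrt]

lemma sqrt_mulVec_dotProduct_self (v : n → ℝ) :
    (hA.sqrt *ᵥ v) ⬝ᵥ (hA.sqrt *ᵥ v) = v ⬝ᵥ A *ᵥ v := by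
  conv_rhs => rw [← hA.sqrt_mul_self, ← mulVec_mulVec, dotProduct_mulVec, hA.vecMul_sqrt]

end Matrix.PosSemidef

lemma stdGaussianPi_map_dotProduct (n : ℕ) (w : Fin n → ℝ) :
    (stdGaussianPi n).map (w ⬝ᵥ ·) = gaussianReal 0 (w ⬝ᵥ w).toNNReal := by
  set L : StrongDual ℝ (EuclideanSpace ℝ (Fin n)) := innerSL ℝ (WithLp.toLp 2 w)
  have hL : (w ⬝ᵥ ·) = L ∘ WithLp.toLp 2 := by
    ext x; simp [L, EuclideanSpace.inner_eq_star_dotProduct, dotProduct_comm]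
  rw [hL, ← Measure.map_map (by fun_prop) (by fun_prop), stdGaussianPi, map_pi_eq_stdGaussian,
    IsGaussian.map_eq_gaussianReal, integral_strongDual_stdGaussian, variance_dual_stdGaussian,
    innerSL_apply_norm, EuclideanSpace.real_norm_sq_eq]
  simp [dotProduct, sq]

lemma gaussianCov_map_dotProduct {p : ℕ} {S : Matrix (Fin p) (Fin p) ℝ} (hS : S.PosSemidef)
    (v : Fin p → ℝ) : (gaussianCov S hS).map (v ⬝ᵥ ·) = gaussianReal 0 (v ⬝ᵥ S *ᵥ v).toNNReal := by
  have h : (v ⬝ᵥ ·) ∘ (hS.sqrt *ᵥ ·) = ((hS.sqrt *ᵥ v) ⬝ᵥ ·) := by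
    ext x; simp [dotProduct_mulVec, hS.vecMul_sqrt]
  rw [gaussianCov, Measure.map_map (by fun_prop) (by fun_prop), h, stdGaussianPi_map_dotProduct,
    hS.sqrt_mulVec_dotProduct_self]

section IndependentGaussians

variable {Ω : Type*} [MeasurableSpace Ω] {μ : Measure Ω} [IsProbabilityMeasure μ]

lemma map_sum_eq_gaussianReal_of_iIndepFun {ι : Type*} {X : ι → Ω → ℝ}
    (hX : ∀ i, Measurable (X i)) (hindep : iIndepFun X μ) {m : ι → ℝ} {v : ι → NNReal}
    (hlaw : ∀ i, μ.map (X i) = gaussianReal (m i) (v i)) (s : Finset ι) :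
    μ.map (∑ i ∈ s, X i) = gaussianReal (∑ i ∈ s, m i) (∑ i ∈ s, v i) := by
  classical
  induction s using Finset.induction with
  | empty =>
    simp only [Finset.sum_empty, gaussianReal_zero_var]
    exact (Measure.map_const μ (0 : ℝ)).trans (by simp)
  | insert a s ha ih =>
    simp only [Finset.sum_insert ha]
    rw [add_comm (X a), add_comm (m a), add_comm (v a)]
    exact gaussianReal_add_gaussianReal_of_indepFun (hindep.indepFun_finsetSum_of_notMem hX ha)
      ih (hlaw a)

lemma map_dotProduct_sum_eq_gaussianReal {ι : Type*} {p : ℕ} {Z : ι → Ω → Fin p → ℝ}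
    (hZ : ∀ i, Measurable (Z i)) (hindep : iIndepFun Z μ) {S : ι → Matrix (Fin p) (Fin p) ℝ}
    (hS : ∀ i, (S i).PosSemidef) (hlaw : ∀ i, μ.map (Z i) = gaussianCov (S i) (hS i))
    (s : Finset ι) (v : Fin p → ℝ) :
    μ.map (fun ω => v ⬝ᵥ ∑ i ∈ s, Z i ω) = gaussianReal 0 (v ⬝ᵥ (∑ i ∈ s, S i) *ᵥ v).toNNReal := by
  have hlaw_v (i : ι) :
      μ.map (fun ω => v ⬝ᵥ Z i ω) = gaussianReal 0 (v ⬝ᵥ S i *ᵥ v).toNNReal := by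
    rw [← gaussianCov_map_dotProduct (hS i), ← hlaw i, Measure.map_map (by fun_prop) (hZ i)]
    rfl
  have hvar : ∑ i ∈ s, (v ⬝ᵥ S i *ᵥ v).toNNReal = (v ⬝ᵥ (∑ i ∈ s, S i) *ᵥ v).toNNReal := by
    rw [sum_mulVec, dotProduct_sum, Real.toNNReal_sum_of_nonneg fun i _ => by
      simpa using (hS i).dotProduct_mulVec_nonneg v]
  have hfun : (fun ω => v ⬝ᵥ ∑ i ∈ s, Z i ω) = ∑ i ∈ s, fun ω => v ⬝ᵥ Z i ω := by
    ext ω; simp [dotProduct_sum]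
  rw [hfun, ← hvar]
  simpa only [Finset.sum_const_zero] using map_sum_eq_gaussianReal_of_iIndepFun
    (X := fun i ω => v ⬝ᵥ Z i ω) (fun i => by fun_prop)
    (hindep.comp (fun _ => (v ⬝ᵥ ·)) fun _ => by fun_prop) hlaw_v s

lemma ae_sum_ne_zero_of_posDef {ι : Type*} {p : ℕ} (hp : 1 ≤ p) {Z : ι → Ω → Fin p → ℝ}
    (hZ : ∀ i, Measurable (Z i)) (hindep : iIndepFun Z μ) {S : ι → Matrix (Fin p) (Fin p) ℝ}
    (hS : ∀ i, (S i).PosSemidef) (hlaw : ∀ i, μ.map (Z i) = gaussianCov (S i) (hS i))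
    {s : Finset ι} (hpos : (∑ i ∈ s, S i).PosDef) :
    ∀ᵐ ω ∂μ, ∑ i ∈ s, Z i ω ≠ 0 := by
  set e : Fin p → ℝ := Pi.single ⟨0, hp⟩ 1
  have he : e ≠ 0 := by simp [e]
  have hvar : (e ⬝ᵥ (∑ i ∈ s, S i) *ᵥ e).toNNReal ≠ 0 := by
    simpa using hpos.dotProduct_mulVec_pos he
  have hnull : μ ((fun ω => e ⬝ᵥ ∑ i ∈ s, Z i ω) ⁻¹' {0}) = 0 := by
    rw [← Measure.map_apply (by fun_prop) (measurableSet_singleton 0),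
      map_dotProduct_sum_eq_gaussianReal hZ hindep hS hlaw]
    exact gaussianReal_absolutelyContinuous 0 hvar Real.volume_singleton
  refine ae_iff.2 (measure_mono_null (fun ω hω => ?_) hnull)
  simp_all

end IndependentGaussians

lemma ProbabilityTheory.IndepFun.measureReal_preimage_prodMk {Ω α β : Type*} [MeasurableSpace Ω]
    [MeasurableSpace α] [MeasurableSpace β] {μ : Measure Ω} [IsFiniteMeasure μ] {X : Ω → α}
    {Y : Ω → β} (h : IndepFun X Y μ) (hX : Measurable X) (hY : Measurable Y) {E : Set (α × β)}
    (hE : MeasurableSet E) :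
    μ.real ((fun ω => (X ω, Y ω)) ⁻¹' E) = ∫ ω, (μ.map Y).real (Prod.mk (X ω) ⁻¹' E) ∂μ := by
  have hslice : Measurable fun x => (μ.map Y) (Prod.mk x ⁻¹' E) :=
    measurable_measure_prodMk_left hE
  rw [← map_measureReal_apply (hX.prodMk hY) hE,
    (indepFun_iff_map_prod_eq_prod_map_map hX.aemeasurable hY.aemeasurable).1 h, measureReal_def,
    Measure.prod_apply hE,
    ← integral_toReal hslice.aemeasurable (ae_of_all _ fun _ => measure_lt_top _ _),
    integral_map hX.aemeasurable hslice.ennreal_toReal.aestronglyMeasurable]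
  rfl

lemma Phi_eq_cdf : Phi = cdf (gaussianReal 0 1) := by
  ext x
  rw [cdf_eq_real, measureReal_def, gaussianReal_apply_eq_integral 0 one_ne_zero,
    ENNReal.toReal_ofReal (integral_nonneg fun _ => gaussianPDFReal_nonneg _ _ _), Phi]
  simp [gaussianPDFReal]

lemma gaussianReal_real_Iio {v : NNReal} (hv : v ≠ 0) (c : ℝ) :
    (gaussianReal 0 v).real (Iio c) = Phi (c / √v) := by
  have hσ : 0 < √(v : ℝ) := Real.sqrt_pos.2 (by positivity)
  have hmap : (gaussianReal 0 1).map (√(v : ℝ) * ·) = gaussianReal 0 v := by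
    rw [gaussianReal_map_const_mul, mul_zero, mul_one]
    congr
    exact Real.sq_sqrt v.2
  have hpre : (√(v : ℝ) * ·) ⁻¹' Iio c = Iio (c / √v) := by
    ext x; simp [lt_div_iff₀ hσ, mul_comm]
  have := nullSingletonClass_gaussianReal (μ := 0) one_ne_zero
  rw [← hmap, map_measureReal_apply (by fun_prop) measurableSet_Iio, hpre,
    measureReal_congr Iio_ae_eq_Iic, Phi_eq_cdf, cdf_eq_real]

lemma dotProduct_self_nonneg {n : Type*} [Fintype n] (x : n → ℝ) : 0 ≤ x ⬝ᵥ x :=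
  Fintype.sum_nonneg fun i => mul_self_nonneg (x i)

section l2norm

variable {p : ℕ}

lemma l2norm_eq_sqrt_dotProduct (x : Fin p → ℝ) : l2norm x = √(x ⬝ᵥ x) := by
  simp [l2norm, dotProduct, sq]

lemma l2norm_nonneg (x : Fin p → ℝ) : 0 ≤ l2norm x := Real.sqrt_nonneg _

@[fun_prop]
lemma measurable_l2norm : Measurable (l2norm (p := p)) := by
  unfold l2norm; fun_prop

lemma l2norm_smul (c : ℝ) (x : Fin p → ℝ) : l2norm (c • x) = |c| * l2norm x := by
  simp_rw [l2norm_eq_sqrt_dotProduct, smul_dotProduct, dotProduct_smul, smul_eq_mul, ← mul_assoc,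
    Real.sqrt_mul' _ (dotProduct_self_nonneg x), Real.sqrt_mul_self_eq_abs]

lemma l2norm_add_lt_l2norm_iff (x v : Fin p → ℝ) :
    l2norm (x + v) < l2norm x ↔ v ⬝ᵥ x < -(v ⬝ᵥ v) / 2 := by
  rw [l2norm_eq_sqrt_dotProduct, l2norm_eq_sqrt_dotProduct,
    Real.sqrt_lt_sqrt_iff (dotProduct_self_nonneg _)]
  simp only [add_dotProduct, dotProduct_add, dotProduct_comm x v]
  constructor <;> intro h <;> linarith

end l2norm

lemma gaussianCov_real_l2norm_add_lt {p : ℕ} {S : Matrix (Fin p) (Fin p) ℝ} (hS : S.PosSemidef)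
    (hSpos : S.PosDef) {v : Fin p → ℝ} (hv : v ≠ 0) :
    (gaussianCov S hS).real {x | l2norm (x + v) < l2norm x}
      = Phi (-l2norm v / (2 * l2norm (hS.sqrt *ᵥ fun j => v j / l2norm v))) := by
  have hq : 0 < v ⬝ᵥ S *ᵥ v := by simpa using hSpos.dotProduct_mulVec_pos hv
  have hvv : 0 < v ⬝ᵥ v := (dotProduct_self_nonneg v).lt_of_ne' (by simpa using hv)
  have hset : {x | l2norm (x + v) < l2norm x} = (v ⬝ᵥ ·) ⁻¹' Iio (-(v ⬝ᵥ v) / 2) := by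
    ext x; simp [l2norm_add_lt_l2norm_iff]
  have hnorm : l2norm (hS.sqrt *ᵥ fun j => v j / l2norm v) = √(v ⬝ᵥ S *ᵥ v) / l2norm v := by
    rw [show (fun j => v j / l2norm v) = (l2norm v)⁻¹ • v by ext; simp [div_eq_inv_mul],
      mulVec_smul, l2norm_smul, l2norm_eq_sqrt_dotProduct (hS.sqrt *ᵥ v),
      hS.sqrt_mulVec_dotProduct_self, abs_inv, abs_of_nonneg (l2norm_nonneg v), inv_mul_eq_div]
  rw [hset, ← map_measureReal_apply (by fun_prop) measurableSet_Iio, gaussianCov_map_dotProduct,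
    gaussianReal_real_Iio (by simpa using hq), hnorm, Real.coe_toNNReal _ hq.le,
    l2norm_eq_sqrt_dotProduct]
  have hvv_sqrt := Real.sqrt_pos.2 hvv
  have hq_sqrt := Real.sqrt_pos.2 hq
  field_simp
  rw [Real.sq_sqrt hvv.le]

/-- Let `Z_1, …, Z_T` be independent centered Gaussians in `ℝ^p` with
`Z_i ~ N(0, Σ_i)`, `Σ_1` positive definite and `∑_{i=2}^T Σ_i` positive definite. With
`S_T = Z_1 + ⋯ + Z_T` and `V_T = Z_2 + ⋯ + Z_T`,
`P(‖Z_1‖₂ > ‖S_T‖₂) = E_{V_T}[Φ(−‖V_T‖₂ / (2 ‖Σ_1^{1/2} (V_T/‖V_T‖₂)‖₂))]`.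
(Here the family is indexed by `Fin T`, with `Z_1` the entry at index `⟨0, hT⟩`.) -/
theorem stmt_13
    {Ω : Type} [MeasurableSpace Ω] (μ : Measure Ω) [IsProbabilityMeasure μ]
    (p T : ℕ) (hp : 1 ≤ p) (hT : 0 < T)
    (Z : Fin T → Ω → (Fin p → ℝ)) (hmeas : ∀ i, Measurable (Z i))
    (Covs : Fin T → Matrix (Fin p) (Fin p) ℝ)
    (hpsd : ∀ i, (Covs i).PosSemidef)
    (hindep : iIndepFun Z μ)
    (hlaw : ∀ i, Measure.map (Z i) μ = gaussianCov (Covs i) (hpsd i))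
    (hCov1 : (Covs ⟨0, hT⟩).PosDef)
    (hV : (∑ i ∈ Finset.univ.filter (fun i => i ≠ (⟨0, hT⟩ : Fin T)), Covs i).PosDef) :
    (μ {ω | l2norm (∑ i, Z i ω) < l2norm (Z ⟨0, hT⟩ ω)}).toReal
      = ∫ ω, Phi (-(l2norm (∑ i ∈ Finset.univ.filter (fun i => i ≠ (⟨0, hT⟩ : Fin T)), Z i ω))
            / (2 * l2norm ((hpsd ⟨0, hT⟩).sqrt.mulVec
                (fun j => (∑ i ∈ Finset.univ.filter (fun i => i ≠ (⟨0, hT⟩ : Fin T)), Z i ω) j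
                  / l2norm (∑ i ∈ Finset.univ.filter
                      (fun i => i ≠ (⟨0, hT⟩ : Fin T)), Z i ω))))) ∂μ := by
  set i₀ : Fin T := ⟨0, hT⟩
  set s := Finset.univ.filter (fun i => i ≠ i₀)
  set V : Ω → Fin p → ℝ := fun ω => ∑ i ∈ s, Z i ω
  have hV_meas : Measurable V := Finset.measurable_sum s fun i _ => hmeas i
  have hsplit (ω : Ω) : ∑ i, Z i ω = Z i₀ ω + V ω := by
    simp only [V, s, Finset.filter_ne']
    exact (Finset.add_sum_erase _ (Z · ω) (Finset.mem_univ i₀)).symm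
  have hindep_V : IndepFun V (Z i₀) μ := by
    simpa [V, ← Finset.sum_fn] using hindep.indepFun_finsetSum_of_notMem hmeas (by simp [s])
  have hevent : {ω | l2norm (∑ i, Z i ω) < l2norm (Z i₀ ω)}
      = (fun ω => (V ω, Z i₀ ω)) ⁻¹' {q | l2norm (q.2 + q.1) < l2norm q.2} := by
    ext ω; simp [hsplit]
  rw [← measureReal_def, hevent, hindep_V.measureReal_preimage_prodMk hV_meas (hmeas i₀)
    (measurableSet_lt (by fun_prop) (by fun_prop))]
  refine integral_congr_ae ?_
  filter_upwards [ae_sum_ne_zero_of_posDef hp hmeas hindep hpsd hlaw hV] with ω hω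
  rw [hlaw i₀]
  exact gaussianCov_real_l2norm_add_lt (hpsd i₀) hCov1 hω
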